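/- Let 𝔚 be a two-dimensional linear subspace of ℂ² ⊗ ℂ² and let φ ⊗ ψ ∈ 𝔚 be a nonzero product vector. Then φ ⊗ ψ is, up to scalar multiples, the unique nonzero product vector in 𝔚 if and only if there exist φ̄ ∈ ℂ² linearly independent of φ and ψ̄ ∈ ℂ² linearly independent of ψ such that 𝔚 = span{φ ⊗ ψ, φ ⊗ ψ̄ + φ̄ ⊗ ψ}. -/

import Mathlib

open scoped TensorProduct

open Matrix

noncomputable def toMat : ((Fin 2 → ℂ) ⊗[ℂ] (Fin 2 → ℂ)) →ₗ[ℂ] Matrix (Fin 2) (Fin 2) ℂ :=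
  TensorProduct.lift
    (LinearMap.mk₂ ℂ Matrix.vecMulVec
      (fun x x' y => by ext i j; simp [Matrix.vecMulVec_apply]; ring)
      (fun c x y => by ext i j; simp [Matrix.vecMulVec_apply]; ring)
      (fun x y y' => by ext i j; simp [Matrix.vecMulVec_apply]; ring)
      (fun c x y => by ext i j; simp [Matrix.vecMulVec_apply]; ring))

@[simp] lemma toMat_tmul (x y : Fin 2 → ℂ) : toMat (x ⊗ₜ[ℂ] y) = Matrix.vecMulVec x y := rfl

noncomputable def fromMat : Matrix (Fin 2) (Fin 2) ℂ →ₗ[ℂ] ((Fin 2 → ℂ) ⊗[ℂ] (Fin 2 → ℂ)) where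
  toFun M := ∑ i : Fin 2, ∑ j : Fin 2, M i j • ((Pi.single i 1 : Fin 2 → ℂ) ⊗ₜ[ℂ] (Pi.single j 1 : Fin 2 → ℂ))
  map_add' M N := by
    simp [add_smul, Finset.sum_add_distrib]
  map_smul' c M := by
    simp [smul_smul, Finset.smul_sum]

lemma fromMat_toMat (t : (Fin 2 → ℂ) ⊗[ℂ] (Fin 2 → ℂ)) : fromMat (toMat t) = t := by
  have h : (fromMat.comp toMat) = LinearMap.id := by
    apply TensorProduct.ext'
    intro x y
    have hx : x = x 0 • (Pi.single 0 1 : Fin 2 → ℂ) + x 1 • (Pi.single 1 1 : Fin 2 → ℂ) := by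
      ext i; fin_cases i <;> simp
    have hy : y = y 0 • (Pi.single 0 1 : Fin 2 → ℂ) + y 1 • (Pi.single 1 1 : Fin 2 → ℂ) := by
      ext i; fin_cases i <;> simp
    simp only [LinearMap.comp_apply, toMat_tmul, LinearMap.id_apply]
    conv_rhs => rw [hx, hy]
    simp only [fromMat, LinearMap.coe_mk, AddHom.coe_mk, Fin.sum_univ_two, vecMulVec_apply, TensorProduct.add_tmul, TensorProduct.tmul_add,
      TensorProduct.smul_tmul', TensorProduct.tmul_smul, smul_smul]
    simp only [← TensorProduct.smul_tmul', smul_add, smul_smul]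
    module
  calc fromMat (toMat t) = (fromMat.comp toMat) t := rfl
    _ = t := by rw [h]; rfl

lemma toMat_injective : Function.Injective toMat :=
  Function.LeftInverse.injective fromMat_toMat

lemma pair_det_ne_zero {x y : Fin 2 → ℂ} (h : LinearIndependent ℂ ![x, y]) :
    x 0 * y 1 - x 1 * y 0 ≠ 0 := by
  rw [linearIndependent_fin2] at h
  obtain ⟨hy, hxy⟩ := h
  simp only [Matrix.cons_val_one, Matrix.head_cons, Matrix.cons_val_zero] at hy hxy
  intro hd
  by_cases h0 : y 0 = 0
  · by_cases h1 : y 1 = 0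
    · exact hy (by ext i; fin_cases i <;> simp [h0, h1])
    · have hx0 : x 0 = 0 := by
        have h2 : x 0 * y 1 = 0 := by linear_combination hd + x 1 * h0
        rcases mul_eq_zero.1 h2 with h | h
        · exact h
        · exact absurd h h1
      apply hxy (x 1 / y 1)
      ext i
      fin_cases i
      · simp [h0, hx0]
      · simp only [Pi.smul_apply, smul_eq_mul]
        field_simp; exact mul_comm _ _
  · apply hxy (x 0 / y 0)
    ext i
    fin_cases i
    · simp only [Pi.smul_apply, smul_eq_mul]
      field_simp; exact mul_comm _ _
    · simp only [Pi.smul_apply, smul_eq_mul]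
      field_simp
      simp only [Fin.mk_one]; linear_combination hd

lemma decomp (φ ψ : Fin 2 → ℂ) (N : Matrix (Fin 2) (Fin 2) ℂ) (hφ : φ ≠ 0) (hψ : ψ ≠ 0)
    (hD : φ 0 * ψ 0 * N 1 1 + φ 1 * ψ 1 * N 0 0 - φ 0 * ψ 1 * N 1 0 - φ 1 * ψ 0 * N 0 1 = 0) :
    ∃ a b : Fin 2 → ℂ, N = vecMulVec φ a + vecMulVec b ψ := by
  by_cases hφ0 : φ 0 = 0
  · have hφ1 : φ 1 ≠ 0 := fun h => hφ (by ext i; fin_cases i <;> simp [hφ0, h])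
    by_cases hψ0 : ψ 0 = 0
    · have hψ1 : ψ 1 ≠ 0 := fun h => hψ (by ext i; fin_cases i <;> simp [hψ0, h])
      have h2 : φ 1 * ψ 1 * N 0 0 = 0 := by
        linear_combination hD + (ψ 1 * N 1 0 - ψ 0 * N 1 1) * hφ0 + (φ 1 * N 0 1) * hψ0
      have hN00 : N 0 0 = 0 := by simpa [mul_eq_zero, hφ1, hψ1] using h2
      refine ⟨![N 1 0 / φ 1, N 1 1 / φ 1], ![N 0 1 / ψ 1, 0], ?_⟩
      ext i j
      fin_cases i <;> fin_cases j <;>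
          simp only [Matrix.add_apply, vecMulVec_apply, Matrix.cons_val_zero,
            Matrix.cons_val_one, Matrix.head_cons, Fin.isValue, Fin.mk_zero, Fin.mk_one]
      · rw [hφ0, hψ0, hN00]; ring
      · rw [hφ0]; field_simp; ring
      · rw [hψ0]; field_simp; ring
      · field_simp; ring
    · -- φ 0 = 0, ψ 0 ≠ 0 : row 0 of N is multiple of ψ
      have hN01 : ψ 0 * N 0 1 = ψ 1 * N 0 0 := by
        have hf : φ 1 * (ψ 1 * N 0 0 - ψ 0 * N 0 1) = 0 := by
          linear_combination hD + (ψ 1 * N 1 0 - ψ 0 * N 1 1) * hφ0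
        have := (mul_eq_zero.1 hf).resolve_left hφ1
        linear_combination -this
      refine ⟨![N 1 0 / φ 1 - (N 0 0 / ψ 0) * (ψ 0 / φ 1), N 1 1 / φ 1 - (N 0 0 / ψ 0) * (ψ 1 / φ 1)],
        ![N 0 0 / ψ 0, N 0 0 / ψ 0], ?_⟩
      ext i j
      fin_cases i <;> fin_cases j <;>
          simp only [Matrix.add_apply, vecMulVec_apply, Matrix.cons_val_zero,
            Matrix.cons_val_one, Matrix.head_cons, Fin.isValue, Fin.mk_zero, Fin.mk_one]
      · rw [hφ0]; field_simp; ring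
      · rw [hφ0]; field_simp; linear_combination φ 1 * hN01
      · field_simp; ring
      · field_simp; ring
  · by_cases hψ0 : ψ 0 = 0
    · have hψ1 : ψ 1 ≠ 0 := fun h => hψ (by ext i; fin_cases i <;> simp [hψ0, h])
      -- column 0 of N is multiple of φ
      have hN10 : φ 0 * N 1 0 = φ 1 * N 0 0 := by
        have hf : ψ 1 * (φ 1 * N 0 0 - φ 0 * N 1 0) = 0 := by
          linear_combination hD + (φ 1 * N 0 1 - φ 0 * N 1 1) * hψ0
        have := (mul_eq_zero.1 hf).resolve_left hψ1
        linear_combination -this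
      refine ⟨![N 0 0 / φ 0, 0], ![N 0 1 / ψ 1, N 1 1 / ψ 1], ?_⟩
      ext i j
      fin_cases i <;> fin_cases j <;>
          simp only [Matrix.add_apply, vecMulVec_apply, Matrix.cons_val_zero,
            Matrix.cons_val_one, Matrix.head_cons, Fin.isValue, Fin.mk_zero, Fin.mk_one]
      · rw [hψ0]; field_simp; ring
      · field_simp; ring
      · rw [hψ0]; field_simp; linear_combination ψ 1 * hN10
      · field_simp; ring
    · -- generic case
      refine ⟨![N 0 0 / φ 0, N 0 1 / φ 0], ![0, (φ 0 * N 1 0 - φ 1 * N 0 0) / (φ 0 * ψ 0)], ?_⟩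
      ext i j
      fin_cases i <;> fin_cases j <;>
          simp only [Matrix.add_apply, vecMulVec_apply, Matrix.cons_val_zero,
            Matrix.cons_val_one, Matrix.head_cons, Fin.isValue, Fin.mk_zero, Fin.mk_one]
      · field_simp; ring
      · field_simp; ring
      · field_simp; ring
      · field_simp; linear_combination hD

lemma det_zero_decomp (A : Matrix (Fin 2) (Fin 2) ℂ) (h : A.det = 0) :
    ∃ x y, A = vecMulVec x y := by
  rw [Matrix.det_fin_two] at h
  by_cases h00 : A 0 0 = 0
  · have h2 : A 0 1 * A 1 0 = 0 := by linear_combination A 1 1 * h00 - h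
    rcases mul_eq_zero.1 h2 with h01 | h10
    · exact ⟨![0, 1], ![A 1 0, A 1 1], by
        ext i j; fin_cases i <;> fin_cases j <;>
          simp [vecMulVec_apply, h00, h01]⟩
    · exact ⟨![A 0 1, A 1 1], ![0, 1], by
        ext i j; fin_cases i <;> fin_cases j <;>
          simp [vecMulVec_apply, h00, h10]⟩
  · refine ⟨![A 0 0, A 1 0], ![1, A 0 1 / A 0 0], ?_⟩
    ext i j
    fin_cases i <;> fin_cases j <;>
      simp only [vecMulVec_apply, Matrix.cons_val_zero, Matrix.cons_val_one, Matrix.head_cons,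
        Fin.isValue, Fin.mk_zero, Fin.mk_one]
    · ring
    · field_simp
    · ring
    · field_simp; linear_combination h

theorem unique_product_vector_iff
    (W : Submodule ℂ ((Fin 2 → ℂ) ⊗[ℂ] (Fin 2 → ℂ)))
    (hW : Module.finrank ℂ W = 2)
    (φ ψ : Fin 2 → ℂ) (hmem : φ ⊗ₜ[ℂ] ψ ∈ W) (hne : φ ⊗ₜ[ℂ] ψ ≠ 0) :
    (∀ (φ' ψ' : Fin 2 → ℂ), φ' ⊗ₜ[ℂ] ψ' ∈ W → φ' ⊗ₜ[ℂ] ψ' ≠ 0 →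
        ∃ c : ℂ, φ' ⊗ₜ[ℂ] ψ' = c • (φ ⊗ₜ[ℂ] ψ)) ↔
    (∃ (φbar ψbar : Fin 2 → ℂ),
        LinearIndependent ℂ ![φ, φbar] ∧ LinearIndependent ℂ ![ψ, ψbar] ∧
        W = Submodule.span ℂ {φ ⊗ₜ[ℂ] ψ, φ ⊗ₜ[ℂ] ψbar + φbar ⊗ₜ[ℂ] ψ}) := by
  have hφ : φ ≠ 0 := fun h => hne (by rw [h, TensorProduct.zero_tmul])
  have hψ : ψ ≠ 0 := fun h => hne (by rw [h, TensorProduct.tmul_zero])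
  constructor
  · intro huniq
    -- find v ∈ W outside the line spanned by φ ⊗ ψ
    have hspan_le : Submodule.span ℂ {φ ⊗ₜ[ℂ] ψ} ≤ W := by
      rw [Submodule.span_le]; simpa using hmem
    have hlt : Submodule.span ℂ {φ ⊗ₜ[ℂ] ψ} < W := by
      refine lt_of_le_of_ne hspan_le ?_
      intro h
      have h1 : Module.finrank ℂ (Submodule.span ℂ ({φ ⊗ₜ[ℂ] ψ} : Set _)) = 1 :=
        finrank_span_singleton hne
      rw [h, hW] at h1; norm_num at h1
    obtain ⟨v, hvW, hv⟩ := SetLike.exists_of_lt hlt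
    have hli : LinearIndependent ℂ ![φ ⊗ₜ[ℂ] ψ, v] := by
      rw [linearIndependent_fin2]
      simp only [Matrix.cons_val_one, Matrix.head_cons, Matrix.cons_val_zero]
      constructor
      · intro h; exact hv (h ▸ Submodule.zero_mem _)
      · intro c hc
        have hc0 : c ≠ 0 := fun h => hne (by rw [← hc, h, zero_smul])
        apply hv
        rw [show v = c⁻¹ • (φ ⊗ₜ[ℂ] ψ) from by
          rw [← hc, smul_smul, inv_mul_cancel₀ hc0, one_smul]]
        exact Submodule.smul_mem _ _ (Submodule.mem_span_singleton_self _)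
    have hWspan : W = Submodule.span ℂ {φ ⊗ₜ[ℂ] ψ, v} := by
      have hle : Submodule.span ℂ {φ ⊗ₜ[ℂ] ψ, v} ≤ W := by
        rw [Submodule.span_le]
        rintro x hx
        rcases hx with rfl | rfl
        · exact hmem
        · exact hvW
      refine (Submodule.eq_of_le_of_finrank_le hle ?_).symm
      have hr : ({φ ⊗ₜ[ℂ] ψ, v} : Set _) = Set.range ![φ ⊗ₜ[ℂ] ψ, v] := by
        ext z
        simp [Fin.exists_fin_two, or_comm]
      rw [hW, hr, finrank_span_eq_card hli]
      simp
    -- matrix picture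
    set M : Matrix (Fin 2) (Fin 2) ℂ := vecMulVec φ ψ with hM
    set N : Matrix (Fin 2) (Fin 2) ℂ := toMat v with hN
    have hkey : ∀ a b : ℂ, (a • M + b • N).det = 0 → b = 0 := by
      intro a b hdet
      by_contra hb
      have hvmem : v ∈ Submodule.span ℂ ({φ ⊗ₜ[ℂ] ψ} : Set _) := by
        set t := a • (φ ⊗ₜ[ℂ] ψ) + b • v with ht
        have htmat : toMat t = a • M + b • N := by
          simp [ht, hM, hN]
        obtain ⟨x, y, hxy⟩ := det_zero_decomp _ hdet
        have htxy : t = x ⊗ₜ[ℂ] y := by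
          apply toMat_injective
          rw [htmat, hxy, toMat_tmul]
        have hd : ∃ d : ℂ, b • v = d • (φ ⊗ₜ[ℂ] ψ) := by
          by_cases ht0 : t = 0
          · refine ⟨-a, ?_⟩
            have : a • (φ ⊗ₜ[ℂ] ψ) + b • v = 0 := ht ▸ ht0
            linear_combination (norm := module) this
          · have htW : x ⊗ₜ[ℂ] y ∈ W := by
              rw [← htxy, ht]
              exact W.add_mem (W.smul_mem _ hmem) (W.smul_mem _ hvW)
            obtain ⟨c, hc⟩ := huniq x y htW (htxy ▸ ht0)
            refine ⟨c - a, ?_⟩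
            rw [← htxy, ht] at hc
            linear_combination (norm := module) hc
        obtain ⟨d, hd⟩ := hd
        rw [show v = (b⁻¹ * d) • (φ ⊗ₜ[ℂ] ψ) from by
          rw [mul_smul, ← hd, smul_smul, inv_mul_cancel₀ hb, one_smul]]
        exact Submodule.smul_mem _ _ (Submodule.mem_span_singleton_self _)
      exact hv hvmem
    have hNdet : N.det ≠ 0 := by
      intro h
      have := hkey 0 1 (by simpa using h)
      norm_num at this
    have hD : φ 0 * ψ 0 * N 1 1 + φ 1 * ψ 1 * N 0 0 - φ 0 * ψ 1 * N 1 0 - φ 1 * ψ 0 * N 0 1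
        = 0 := by
      set D := φ 0 * ψ 0 * N 1 1 + φ 1 * ψ 1 * N 0 0 - φ 0 * ψ 1 * N 1 0 - φ 1 * ψ 0 * N 0 1
        with hDdef
      have hdf : ∀ a b : ℂ, (a • M + b • N).det = a * b * D + b ^ 2 * N.det := by
        intro a b
        simp only [Matrix.det_fin_two, Matrix.add_apply, Matrix.smul_apply, hM,
          vecMulVec_apply, smul_eq_mul, hDdef]
        ring
      by_contra hD0
      exact hD0 (hkey (-N.det) D (by rw [hdf]; ring))
    obtain ⟨ψbar, φbar, hNdec⟩ := decomp φ ψ N hφ hψ hD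
    have hv_eq : v = φ ⊗ₜ[ℂ] ψbar + φbar ⊗ₜ[ℂ] ψ := by
      apply toMat_injective
      rw [show toMat v = N from rfl, hNdec]
      simp
    refine ⟨φbar, ψbar, ?_, ?_, ?_⟩
    · rw [linearIndependent_fin2]
      simp only [Matrix.cons_val_one, Matrix.head_cons, Matrix.cons_val_zero]
      constructor
      · intro hb0
        apply hNdet
        rw [hNdec, hb0]
        simp only [Matrix.det_fin_two, Matrix.add_apply, vecMulVec_apply, Pi.zero_apply]
        ring
      · intro c hc
        apply hNdet
        have h0 : c * φbar 0 = φ 0 := by simpa using congrFun hc 0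
        have h1 : c * φbar 1 = φ 1 := by simpa using congrFun hc 1
        rw [hNdec]
        simp only [Matrix.det_fin_two, Matrix.add_apply, vecMulVec_apply]
        rw [← h0, ← h1]
        ring
    · rw [linearIndependent_fin2]
      simp only [Matrix.cons_val_one, Matrix.head_cons, Matrix.cons_val_zero]
      constructor
      · intro ha0
        apply hNdet
        rw [hNdec, ha0]
        simp only [Matrix.det_fin_two, Matrix.add_apply, vecMulVec_apply, Pi.zero_apply]
        ring
      · intro c hc
        apply hNdet
        have h0 : c * ψbar 0 = ψ 0 := by simpa using congrFun hc 0
        have h1 : c * ψbar 1 = ψ 1 := by simpa using congrFun hc 1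
        rw [hNdec]
        simp only [Matrix.det_fin_two, Matrix.add_apply, vecMulVec_apply]
        rw [← h0, ← h1]
        ring
    · rw [hWspan, hv_eq]
  · rintro ⟨φbar, ψbar, hφind, hψind, hWeq⟩
    intro φ' ψ' hmem' hne'
    rw [hWeq, Submodule.mem_span_pair] at hmem'
    obtain ⟨a, b, hab⟩ := hmem'
    have E : ∀ i j, a * (φ i * ψ j) + b * (φ i * ψbar j + φbar i * ψ j) = φ' i * ψ' j := by
      intro i j
      have := congrArg (fun m => toMat m i j) hab
      simpa [Matrix.add_apply, Matrix.smul_apply, vecMulVec_apply, smul_eq_mul,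
        mul_add] using this
    have hδφ := pair_det_ne_zero hφind
    have hδψ := pair_det_ne_zero hψind
    have h1 : ∀ j, (φ 0 * φ' 1 - φ 1 * φ' 0) * ψ' j
        = b * (φ 0 * φbar 1 - φ 1 * φbar 0) * ψ j := by
      intro j
      linear_combination φ 1 * E 0 j - φ 0 * E 1 j
    have h2 : ∀ i, (ψ 0 * ψ' 1 - ψ 1 * ψ' 0) * φ' i
        = b * (ψ 0 * ψbar 1 - ψ 1 * ψbar 0) * φ i := by
      intro i
      linear_combination ψ 1 * E i 0 - ψ 0 * E i 1
    have h3 : (φ 0 * φ' 1 - φ 1 * φ' 0) * (ψ 0 * ψ' 1 - ψ 1 * ψ' 0) = 0 := by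
      linear_combination ψ 0 * h1 1 - ψ 1 * h1 0
    have hb : b = 0 := by
      rcases mul_eq_zero.1 h3 with hF | hG
      · obtain ⟨j, hj⟩ := Function.ne_iff.1 hψ
        have h4 := h1 j
        rw [hF, zero_mul] at h4
        have h5 : b * ((φ 0 * φbar 1 - φ 1 * φbar 0) * ψ j) = 0 := by linear_combination -h4
        rcases mul_eq_zero.1 h5 with h | h
        · exact h
        · rcases mul_eq_zero.1 h with h | h
          · exact absurd h hδφ
          · exact absurd h (by simpa using hj)
      · obtain ⟨i, hi⟩ := Function.ne_iff.1 hφ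
        have h4 := h2 i
        rw [hG, zero_mul] at h4
        have h5 : b * ((ψ 0 * ψbar 1 - ψ 1 * ψbar 0) * φ i) = 0 := by linear_combination -h4
        rcases mul_eq_zero.1 h5 with h | h
        · exact h
        · rcases mul_eq_zero.1 h with h | h
          · exact absurd h hδψ
          · exact absurd h (by simpa using hi)
    refine ⟨a, ?_⟩
    rw [← hab, hb]
    simp
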